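/- arXiv:1702.06156 — 3 statements merged into one kernel-verified Lean document; each statement's English description precedes it below -/
import Mathlib

section
/- Let k be a positive integer, μ > 0, and λ satisfy 0 < λ < μk. Then there exists a unique y > 0 satisfying y − λ = ( (y/μ)^k / k! ) / ( Σ_{i=0}^{k} (y/μ)^i / i! ) · y, and moreover this unique solution satisfies y > λ. Consequently the rejection rate x = y − λ is unique and positive. -/
open Finset

/-!
Put `a = y / μ`. The conservation equation says `λ / μ = a (1 - π_k(a))`, the carried load,
which is the mean of the truncated Poisson weights `i ↦ a^i / i!` on `{0, …, k}`. Such a mean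
increases strictly with `a`: pairing the terms `(i, j)` and `(j, i)` of the cross products shows
that each pair contributes with the same sign. The carried load vanishes at `0` and is at least
`k a / (k + a)`, so by continuity it takes the value `λ / μ < k` exactly once. Finally `y > λ`
because `y - λ = π_k y > 0`.
-/

open scoped Nat

lemma sub_mul_sub_pow_mul_pow_pos {a b : ℝ} (ha : 0 < a) (hab : a < b) {i j : ℕ} (hij : i ≠ j) :
    0 < ((i : ℝ) - j) * (b ^ i * a ^ j - b ^ j * a ^ i) := by
  wlog hji : j < i generalizing i j
  · convert this hij.symm (lt_of_le_of_ne (not_lt.1 hji) hij) using 1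
    ring
  obtain ⟨d, rfl⟩ := Nat.exists_eq_add_of_lt hji
  have hfactor : b ^ (j + d + 1) * a ^ j - b ^ j * a ^ (j + d + 1)
      = (b * a) ^ j * (b ^ (d + 1) - a ^ (d + 1)) := by ring
  have hpow : a ^ (d + 1) < b ^ (d + 1) := pow_lt_pow_left₀ hab ha.le d.succ_ne_zero
  rw [hfactor]
  push_cast
  have : 0 < b := ha.trans hab
  exact mul_pos (by linarith) (mul_pos (by positivity) (by linarith))

theorem strictMonoOn_sum_mul_pow_div_sum {s : Finset ℕ} {c : ℕ → ℝ} (hc : ∀ i ∈ s, 0 ≤ c i)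
    {i₀ i₁ : ℕ} (hi₀ : i₀ ∈ s) (hi₁ : i₁ ∈ s) (hne : i₀ ≠ i₁) (hc₀ : 0 < c i₀) (hc₁ : 0 < c i₁) :
    StrictMonoOn (fun a : ℝ => (∑ i ∈ s, i * (c i * a ^ i)) / ∑ i ∈ s, c i * a ^ i)
      (Set.Ioi 0) := by
  intro a ha b hb hab
  have hden : ∀ x : ℝ, 0 < x → 0 < ∑ i ∈ s, c i * x ^ i := fun x hx =>
    sum_pos' (fun i hi => mul_nonneg (hc i hi) (by positivity)) ⟨i₀, hi₀, by positivity⟩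
  rw [div_lt_div_iff₀ (hden a ha) (hden b hb), ← sub_pos]
  set f : ℕ → ℕ → ℝ := fun i j => ((i : ℝ) - j) * (c i * c j) * (b ^ i * a ^ j)
  have hdiff : (∑ i ∈ s, i * (c i * b ^ i)) * (∑ i ∈ s, c i * a ^ i)
      - (∑ i ∈ s, i * (c i * a ^ i)) * (∑ i ∈ s, c i * b ^ i)
      = ∑ i ∈ s, ∑ j ∈ s, f i j := by
    rw [sum_mul_sum, sum_mul_sum]
    nth_rw 2 [sum_comm]
    rw [← sum_sub_distrib]
    refine sum_congr rfl fun i _ => ?_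
    rw [← sum_sub_distrib]
    refine sum_congr rfl fun j _ => ?_
    simp only [f]
    ring
  have hsymm : 2 * ∑ i ∈ s, ∑ j ∈ s, f i j
      = ∑ p ∈ s ×ˢ s, ((p.1 : ℝ) - p.2) * (b ^ p.1 * a ^ p.2 - b ^ p.2 * a ^ p.1)
          * (c p.1 * c p.2) := by
    rw [two_mul]
    nth_rw 2 [sum_comm]
    rw [← sum_add_distrib, sum_product]
    refine sum_congr rfl fun i _ => ?_
    rw [← sum_add_distrib]
    refine sum_congr rfl fun j _ => ?_
    simp only [f]
    ring
  have hpos : 0 < ∑ p ∈ s ×ˢ s, ((p.1 : ℝ) - p.2) * (b ^ p.1 * a ^ p.2 - b ^ p.2 * a ^ p.1)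
      * (c p.1 * c p.2) := by
    refine sum_pos' (fun p hp => ?_) ⟨(i₀, i₁), mem_product.2 ⟨hi₀, hi₁⟩,
      mul_pos (sub_mul_sub_pow_mul_pow_pos ha hab hne) (mul_pos hc₀ hc₁)⟩
    obtain ⟨hp₁, hp₂⟩ := mem_product.1 hp
    refine mul_nonneg ?_ (mul_nonneg (hc _ hp₁) (hc _ hp₂))
    rcases eq_or_ne p.1 p.2 with h | h
    · simp [h]
    · exact (sub_mul_sub_pow_mul_pow_pos ha hab h).le
  linarith

noncomputable def expPartialSum (n : ℕ) (a : ℝ) : ℝ := ∑ i ∈ range n, a ^ i / i !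

noncomputable def erlangB (k : ℕ) (a : ℝ) : ℝ := a ^ k / k ! / expPartialSum (k + 1) a

noncomputable def carriedLoad (k : ℕ) (a : ℝ) : ℝ := a * (1 - erlangB k a)

lemma expPartialSum_succ (n : ℕ) (a : ℝ) :
    expPartialSum (n + 1) a = expPartialSum n a + a ^ n / n ! :=
  sum_range_succ _ n

lemma expPartialSum_nonneg (n : ℕ) {a : ℝ} (ha : 0 ≤ a) : 0 ≤ expPartialSum n a :=
  sum_nonneg fun i _ => by positivity

lemma expPartialSum_succ_pos (n : ℕ) {a : ℝ} (ha : 0 ≤ a) : 0 < expPartialSum (n + 1) a := by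
  rw [expPartialSum, sum_range_succ']
  simpa using add_pos_of_nonneg_of_pos (sum_nonneg fun i _ => by positivity) one_pos

lemma continuous_expPartialSum (n : ℕ) : Continuous (expPartialSum n) := by
  unfold expPartialSum
  fun_prop

lemma mul_expPartialSum (n : ℕ) (a : ℝ) :
    a * expPartialSum n a = ∑ i ∈ range (n + 1), i * ((i ! : ℝ)⁻¹ * a ^ i) := by
  rw [sum_range_succ', expPartialSum, mul_sum]
  simp only [CharP.cast_eq_zero, zero_mul, add_zero]
  refine sum_congr rfl fun i _ => ?_
  rw [Nat.factorial_succ]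
  push_cast
  field_simp
  ring

lemma erlangB_pos (k : ℕ) {a : ℝ} (ha : 0 < a) : 0 < erlangB k a :=
  div_pos (by positivity) (expPartialSum_succ_pos k ha.le)

/-- With `S = expPartialSum k a` and `t = a^k / k!`, `erlangB k a = t / (S + t)` and
`k t ≤ a S`. -/
lemma erlangB_le (k : ℕ) (hk : 0 < k) {a : ℝ} (ha : 0 ≤ a) : erlangB k a ≤ a / (k + a) := by
  obtain ⟨m, rfl⟩ := Nat.exists_eq_add_one_of_ne_zero hk.ne'
  have hterm : (m + 1 : ℕ) * (a ^ (m + 1) / (m + 1)!) ≤ a * expPartialSum (m + 1) a := by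
    have hlast : a ^ m / m ! ≤ expPartialSum (m + 1) a := by
      rw [expPartialSum_succ]
      linarith [expPartialSum_nonneg m ha]
    calc ((m + 1 : ℕ) : ℝ) * (a ^ (m + 1) / (m + 1)!) = a * (a ^ m / m !) := by
          rw [Nat.factorial_succ]; push_cast; field_simp; ring
      _ ≤ a * expPartialSum (m + 1) a := mul_le_mul_of_nonneg_left hlast ha
  rw [erlangB, div_le_div_iff₀ (expPartialSum_succ_pos _ ha) (by positivity),
    expPartialSum_succ]
  linarith

lemma continuousOn_carriedLoad (k : ℕ) : ContinuousOn (carriedLoad k) (Set.Ici 0) := by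
  have hden : ∀ a ∈ Set.Ici (0 : ℝ), expPartialSum (k + 1) a ≠ 0 := fun a ha =>
    (expPartialSum_succ_pos k ha).ne'
  unfold carriedLoad erlangB
  exact continuousOn_id.mul (continuousOn_const.sub
    ((continuousOn_pow k).div_const _ |>.div (continuous_expPartialSum _).continuousOn hden))

lemma carriedLoad_eq_mean (k : ℕ) {a : ℝ} (ha : 0 ≤ a) :
    carriedLoad k a = (∑ i ∈ range (k + 1), i * ((i ! : ℝ)⁻¹ * a ^ i)) /
      ∑ i ∈ range (k + 1), (i ! : ℝ)⁻¹ * a ^ i := by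
  have hS := expPartialSum_succ_pos k ha
  have hsum : ∑ i ∈ range (k + 1), (i ! : ℝ)⁻¹ * a ^ i = expPartialSum (k + 1) a := by
    simp only [expPartialSum, div_eq_inv_mul]
  rw [hsum, ← mul_expPartialSum, carriedLoad, erlangB, eq_div_iff hS.ne', mul_assoc, sub_mul,
    one_mul, div_mul_cancel₀ _ hS.ne', expPartialSum_succ]
  ring

lemma strictMonoOn_carriedLoad {k : ℕ} (hk : 0 < k) :
    StrictMonoOn (carriedLoad k) (Set.Ioi 0) := by
  have hmean := strictMonoOn_sum_mul_pow_div_sum (s := range (k + 1))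
    (c := fun i => (i ! : ℝ)⁻¹) (fun i _ => by positivity)
    (mem_range.2 k.succ_pos) (mem_range.2 (by omega)) zero_ne_one (by positivity) (by positivity)
  exact hmean.congr fun a ha => (carriedLoad_eq_mean k (le_of_lt ha)).symm

lemma exists_carriedLoad_eq {k : ℕ} (hk : 0 < k) {r : ℝ} (hr : 0 < r) (hrk : r < k) :
    ∃ a, 0 < a ∧ carriedLoad k a = r := by
  set A := 2 * r * k / (k - r)
  have hA : 0 < A := div_pos (by positivity) (by linarith)
  have hrA : r < carriedLoad k A := by
    have hB := erlangB_le k hk hA.le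
    have hAk : r * (k + A) < k * A := by
      have : A * (k - r) = 2 * r * k := div_mul_cancel₀ _ (by linarith)
      nlinarith
    calc r < k * A / (k + A) := by rwa [lt_div_iff₀ (by positivity)]
      _ = A * (1 - A / (k + A)) := by field_simp; ring
      _ ≤ carriedLoad k A := mul_le_mul_of_nonneg_left (by linarith) hA.le
  have h0 : carriedLoad k 0 = 0 := zero_mul _
  obtain ⟨a, ⟨ha, -⟩, hload⟩ := intermediate_value_Ioo hA.le
    ((continuousOn_carriedLoad k).mono Set.Icc_subset_Ici_self)
    (show r ∈ Set.Ioo (carriedLoad k 0) (carriedLoad k A) from ⟨by rwa [h0], hrA⟩)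
  exact ⟨a, ha, hload⟩

lemma sub_eq_erlangB_mul_iff (k : ℕ) {μ lam y : ℝ} (hμ : μ ≠ 0) :
    y - lam = erlangB k (y / μ) * y ↔ carriedLoad k (y / μ) = lam / μ := by
  rw [carriedLoad, eq_div_iff hμ]
  have hy : y / μ * μ = y := div_mul_cancel₀ y hμ
  constructor
  · intro h
    linear_combination (1 - erlangB k (y / μ)) * hy + h
  · intro h
    linear_combination h - (1 - erlangB k (y / μ)) * hy

/-- In a symmetric network of `M/M/k/k` queues with exogenous arrival rate `λ`,
service rate `μ`, and `k` servers, subject to `0 < λ < μ k`, the conservation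
equation `y − λ = π_k · y` (with `π_k` the Erlang blocking probability) has a
unique positive solution `y`; moreover this solution satisfies `y > λ`, so the
rejection rate `x = y − λ` is unique and positive. -/
theorem unique_total_arrival_rate_symmetric_network
    (k : ℕ) (hk : 0 < k) (μ lam : ℝ) (hμ : 0 < μ) (hlam : 0 < lam)
    (hstab : lam < μ * k) :
    (∃! y : ℝ, 0 < y ∧
      y - lam = ((y / μ) ^ k / (Nat.factorial k : ℝ)) /
        (∑ i ∈ range (k + 1), (y / μ) ^ i / (Nat.factorial i : ℝ)) * y) ∧
    (∀ y : ℝ, 0 < y →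
      y - lam = ((y / μ) ^ k / (Nat.factorial k : ℝ)) /
        (∑ i ∈ range (k + 1), (y / μ) ^ i / (Nat.factorial i : ℝ)) * y →
      lam < y) := by
  change (∃! y : ℝ, 0 < y ∧ y - lam = erlangB k (y / μ) * y) ∧
    ∀ y : ℝ, 0 < y → y - lam = erlangB k (y / μ) * y → lam < y
  refine ⟨?_, fun y hy hy_eq => by linarith [mul_pos (erlangB_pos k (div_pos hy hμ)) hy]⟩
  simp only [sub_eq_erlangB_mul_iff k hμ.ne']
  obtain ⟨a, ha, hload⟩ :=
    exists_carriedLoad_eq hk (div_pos hlam hμ) ((div_lt_iff₀' hμ).2 hstab)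
  refine ⟨μ * a, ⟨by positivity, by rwa [mul_div_cancel_left₀ a hμ.ne']⟩, ?_⟩
  rintro y ⟨hy, hyload⟩
  have hya : y / μ = a :=
    (strictMonoOn_carriedLoad hk).injOn (div_pos hy hμ) ha (hyload.trans hload.symm)
  rw [← hya, mul_div_cancel₀ y hμ.ne']
end

section
/- Let k be a positive integer, μ > 0, and u ∈ (0,1). Then the polynomial p(y) = Σ_{i=0}^{k} (1/μ^{i−1}) · ((i − u·k)/i!) · y^i has exactly one real positive root, i.e., there is a unique y > 0 with p(y) = 0. -/
open Finset

/-- Coefficients of the occupancy polynomial. -/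
noncomputable def occC (μ u : ℝ) (k i : ℕ) : ℝ :=
  (1 / μ ^ ((i : ℤ) - 1)) * (((i : ℝ) - u * k) / (Nat.factorial i : ℝ))

/-- For an `M/M/k/k` queue with service rate `μ > 0` and occupancy `u ∈ (0,1)`,
the polynomial `p(y) = Σ_{i=0}^{k} μ^{1−i} ((i − u k)/i!) y^i` arising from
Little's law has exactly one real positive root. -/
theorem unique_positive_root_occupancy_polynomial
    (k : ℕ) (hk : 0 < k) (μ u : ℝ) (hμ : 0 < μ) (hu0 : 0 < u) (hu1 : u < 1) :
    ∃! y : ℝ, 0 < y ∧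
      ∑ i ∈ range (k + 1),
        (1 / μ ^ ((i : ℤ) - 1)) * (((i : ℝ) - u * k) / (Nat.factorial i : ℝ)) * y ^ i = 0 := by
  show ∃! y : ℝ, 0 < y ∧ ∑ i ∈ range (k + 1), occC μ u k i * y ^ i = 0
  set c : ℕ → ℝ := occC μ u k with hcdef
  set f : ℝ → ℝ := fun y => ∑ i ∈ range (k + 1), c i * y ^ i with hfdef
  show ∃! y : ℝ, 0 < y ∧ f y = 0
  have hk0 : (0 : ℝ) < k := by exact_mod_cast hk
  have huk : 0 < u * k := mul_pos hu0 hk0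
  have hukk : u * k < k := by nlinarith
  have hμpow : ∀ i : ℕ, 0 < 1 / μ ^ ((i : ℤ) - 1) := fun i => by positivity
  have hfact : ∀ i : ℕ, (0 : ℝ) < (Nat.factorial i : ℝ) := fun i => by
    exact_mod_cast i.factorial_pos
  have hcneg : ∀ i : ℕ, (i : ℝ) < u * k → c i < 0 := by
    intro i hi
    exact mul_neg_of_pos_of_neg (hμpow i) (div_neg_of_neg_of_pos (by linarith) (hfact i))
  have hcpos : ∀ i : ℕ, u * k < (i : ℝ) → 0 < c i := by
    intro i hi
    exact mul_pos (hμpow i) (div_pos (by linarith) (hfact i))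
  have hcnn : ∀ i : ℕ, u * k ≤ (i : ℝ) → 0 ≤ c i := by
    intro i hi
    exact mul_nonneg (hμpow i).le (div_nonneg (by linarith) (hfact i).le)
  set m := ⌈u * k⌉₊ with hm
  have hm0 : 0 < m := Nat.ceil_pos.mpr huk
  have hmk : m ≤ k := Nat.ceil_le.mpr hukk.le
  -- key inequality
  have key : ∀ a b : ℝ, 0 < a → a < b → 0 < a ^ m * f b - b ^ m * f a := by
    intro a b ha hab
    have hb : 0 < b := ha.trans hab
    have hrw : a ^ m * f b - b ^ m * f a
        = ∑ i ∈ range (k + 1), c i * (a ^ m * b ^ i - b ^ m * a ^ i) := by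
      simp only [hfdef, Finset.mul_sum, ← Finset.sum_sub_distrib]
      exact Finset.sum_congr rfl fun i _ => by ring
    rw [hrw]
    apply Finset.sum_pos'
    · intro i _
      rcases le_or_gt m i with hmi | him
      · have h1 : 0 ≤ c i := hcnn i (le_trans (Nat.le_ceil _) (by exact_mod_cast hmi))
        obtain ⟨d, rfl⟩ : ∃ d, i = m + d := ⟨i - m, (Nat.add_sub_cancel' hmi).symm⟩
        have hba : a ^ d ≤ b ^ d := pow_le_pow_left₀ ha.le hab.le d
        have h3 : 0 ≤ (a ^ m * b ^ m) * (b ^ d - a ^ d) :=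
          mul_nonneg (mul_nonneg (pow_pos ha m).le (pow_pos hb m).le) (sub_nonneg.mpr hba)
        have h4 : a ^ m * b ^ (m + d) - b ^ m * a ^ (m + d)
            = (a ^ m * b ^ m) * (b ^ d - a ^ d) := by
          rw [pow_add, pow_add]; ring
        exact mul_nonneg h1 (by linarith)
      · have h1 : c i < 0 := hcneg i (Nat.lt_ceil.mp him)
        obtain ⟨d, hd⟩ : ∃ d, m = i + d := ⟨m - i, (Nat.add_sub_cancel' him.le).symm⟩
        have hd0 : d ≠ 0 := by omega
        have hba : a ^ d < b ^ d := pow_lt_pow_left₀ hab ha.le hd0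
        have h3 : (a ^ i * b ^ i) * (a ^ d - b ^ d) < 0 :=
          mul_neg_of_pos_of_neg (mul_pos (pow_pos ha i) (pow_pos hb i))
            (sub_neg.mpr hba)
        have h4 : a ^ m * b ^ i - b ^ m * a ^ i
            = (a ^ i * b ^ i) * (a ^ d - b ^ d) := by
          rw [hd, pow_add, pow_add]; ring
        exact (mul_pos_of_neg_of_neg h1 (by linarith)).le
    · refine ⟨0, Finset.mem_range.mpr (Nat.succ_pos k), ?_⟩
      have h1 : c 0 < 0 := hcneg 0 (by simpa using huk)
      have h2 : a ^ m < b ^ m := pow_lt_pow_left₀ hab ha.le (by omega)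
      simp only [pow_zero, mul_one]
      exact mul_pos_of_neg_of_neg h1 (by linarith)
  -- existence
  have hck : 0 < c k := hcpos k hukk
  set C : ℝ := ∑ i ∈ range k, |c i| with hCdef
  have hC0 : 0 ≤ C := Finset.sum_nonneg fun i _ => abs_nonneg _
  set b : ℝ := max 1 ((C + 1) / c k) with hbdef
  have hb1 : (1 : ℝ) ≤ b := le_max_left _ _
  have hb0 : (0 : ℝ) < b := lt_of_lt_of_le one_pos hb1
  have hckb : C + 1 ≤ c k * b := by
    have h := le_max_right 1 ((C + 1) / c k)
    rw [div_le_iff₀ hck] at h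
    linarith
  have hfb : 0 < f b := by
    have hsplit : f b = (∑ i ∈ range k, c i * b ^ i) + c k * b ^ k := by
      simp [hfdef, Finset.sum_range_succ]
    have hbound : ∀ i ∈ range k, -(|c i| * b ^ (k - 1)) ≤ c i * b ^ i := by
      intro i hi
      have hik : i ≤ k - 1 := by have := Finset.mem_range.mp hi; omega
      have h1 : b ^ i ≤ b ^ (k - 1) := pow_le_pow_right₀ hb1 hik
      have h2 : |c i * b ^ i| ≤ |c i| * b ^ (k - 1) := by
        rw [abs_mul, abs_of_nonneg (pow_pos hb0 i).le]
        exact mul_le_mul_of_nonneg_left h1 (abs_nonneg _)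
      linarith [neg_abs_le (c i * b ^ i)]
    have hsum : -(C * b ^ (k - 1)) ≤ ∑ i ∈ range k, c i * b ^ i := by
      have := Finset.sum_le_sum hbound
      simpa [Finset.sum_neg_distrib, ← Finset.sum_mul, hCdef] using this
    have hkk : k = (k - 1) + 1 := by omega
    have hbk : b ^ k = b ^ (k - 1) * b := by
      conv_lhs => rw [hkk]
      exact pow_succ b (k - 1)
    have hpw : 0 < b ^ (k - 1) := pow_pos hb0 _
    have h5 : (C + 1) * b ^ (k - 1) ≤ (c k * b) * b ^ (k - 1) :=
      mul_le_mul_of_nonneg_right hckb hpw.le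
    have h6 : (C + 1) * b ^ (k - 1) = C * b ^ (k - 1) + b ^ (k - 1) := by ring
    have h7 : c k * b ^ k = (c k * b) * b ^ (k - 1) := by rw [hbk]; ring
    rw [hsplit]
    linarith
  have hf0 : f 0 = c 0 := by
    show (∑ i ∈ range (k + 1), c i * (0:ℝ) ^ i) = c 0
    rw [Finset.sum_eq_single_of_mem 0 (Finset.mem_range.mpr (Nat.succ_pos k))]
    · simp
    · intro i _ hi0
      simp [zero_pow hi0]
  have hf0neg : f 0 < 0 := by
    rw [hf0]; exact hcneg 0 (by simpa using huk)
  have hcont : Continuous f := by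
    apply continuous_finset_sum
    intro i _
    exact continuous_const.mul (continuous_pow i)
  obtain ⟨y, hymem, hy0⟩ := intermediate_value_Icc hb0.le hcont.continuousOn
    ⟨hf0neg.le, hfb.le⟩
  have hypos : 0 < y := by
    rcases lt_or_eq_of_le hymem.1 with h | h
    · exact h
    · exfalso; rw [← h] at hy0; linarith
  refine ⟨y, ⟨hypos, hy0⟩, ?_⟩
  rintro z ⟨hz0, hzf⟩
  by_contra hne
  rcases lt_or_gt_of_ne hne with h | h
  · have := key z y hz0 h
    rw [hy0, hzf] at this
    simp at this
  · have := key y z hypos h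
    rw [hy0, hzf] at this
    simp at this
end

section
/- Let k be a positive integer and μ > 0. The map y ↦ (y/(kμ))·(1 − B_k(y/μ)), where B_k(ρ) = (ρ^k/k!)/(Σ_{j=0}^{k} ρ^j/j!), is strictly increasing on (0, ∞). -/
/-!
Writing `ρ = y / μ`, the occupancy is `(1 / k) · G(ρ) / F(ρ)` with `F(ρ) = ∑_{j ≤ k} ρ^j / j!`
and `G(ρ) = ρ F'(ρ) = ∑_{j ≤ k} j ρ^j / j!`, i.e. `k` times the occupancy is the mean of the
Poisson law of parameter `ρ` truncated to `{0, …, k}`. Such a mean is increasing in `ρ`: after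
symmetrisation, `G(t) F(s) - G(s) F(t)` is half of a double sum of the nonnegative terms
`w_n w_m (n - m) (t^n s^m - s^n t^m)`, and the term `(n, m) = (k, 0)` is positive.
-/

open Finset
open scoped Nat

lemma pow_mul_pow_le_pow_mul_pow {s t : ℝ} (hs : 0 ≤ s) (hst : s ≤ t) {m n : ℕ} (hmn : m ≤ n) :
    t ^ m * s ^ n ≤ s ^ m * t ^ n := by
  obtain ⟨d, rfl⟩ := Nat.exists_eq_add_of_le hmn
  have ht : 0 ≤ t := hs.trans hst
  calc t ^ m * s ^ (m + d) = (t * s) ^ m * s ^ d := by ring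
    _ ≤ (t * s) ^ m * t ^ d := by gcongr
    _ = s ^ m * t ^ (m + d) := by ring

lemma sub_mul_pow_mul_pow_sub_nonneg {s t : ℝ} (hs : 0 ≤ s) (hst : s ≤ t) (n m : ℕ) :
    0 ≤ ((n : ℝ) - m) * (t ^ n * s ^ m - s ^ n * t ^ m) := by
  rcases le_total n m with h | h
  · exact mul_nonneg_of_nonpos_of_nonpos (by simpa using h)
      (by linarith [pow_mul_pow_le_pow_mul_pow hs hst h])
  · exact mul_nonneg (by simpa using h) (by linarith [pow_mul_pow_le_pow_mul_pow hs hst h])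

section WeightedMean

variable {s : Finset ℕ} {w : ℕ → ℝ}

lemma sum_weight_mul_pow_pos (hw : ∀ n ∈ s, 0 ≤ w n) {i : ℕ} (hi : i ∈ s) (hwi : 0 < w i)
    {x : ℝ} (hx : 0 < x) : 0 < ∑ n ∈ s, w n * x ^ n :=
  sum_pos' (fun n hn => mul_nonneg (hw n hn) (pow_pos hx n).le) ⟨i, hi, mul_pos hwi (pow_pos hx i)⟩

lemma sum_nat_mul_weight_mul_pow_mul_sum_lt (hw : ∀ n ∈ s, 0 ≤ w n)
    {i j : ℕ} (hi : i ∈ s) (hj : j ∈ s) (hij : i < j) (hwi : 0 < w i) (hwj : 0 < w j)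
    {x y : ℝ} (hx : 0 < x) (hxy : x < y) :
    (∑ n ∈ s, n * w n * x ^ n) * ∑ m ∈ s, w m * y ^ m
      < (∑ n ∈ s, n * w n * y ^ n) * ∑ m ∈ s, w m * x ^ m := by
  set term : ℕ → ℕ → ℝ := fun n m => w n * w m * (((n : ℝ) - m) * (y ^ n * x ^ m - x ^ n * y ^ m))
  have hdouble : 2 * ((∑ n ∈ s, n * w n * y ^ n) * (∑ m ∈ s, w m * x ^ m)
      - (∑ n ∈ s, n * w n * x ^ n) * ∑ m ∈ s, w m * y ^ m) = ∑ n ∈ s, ∑ m ∈ s, term n m := by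
    have expand : (∑ n ∈ s, n * w n * y ^ n) * (∑ m ∈ s, w m * x ^ m)
        - (∑ n ∈ s, n * w n * x ^ n) * (∑ m ∈ s, w m * y ^ m)
        = ∑ n ∈ s, ∑ m ∈ s, (n : ℝ) * (w n * w m * (y ^ n * x ^ m - x ^ n * y ^ m)) := by
      simp only [sum_mul_sum, ← sum_sub_distrib]
      exact sum_congr rfl fun n _ => sum_congr rfl fun m _ => by ring
    have swapped : ∑ n ∈ s, ∑ m ∈ s, (n : ℝ) * (w n * w m * (y ^ n * x ^ m - x ^ n * y ^ m))
        = ∑ n ∈ s, ∑ m ∈ s, -((m : ℝ) * (w n * w m * (y ^ n * x ^ m - x ^ n * y ^ m))) := by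
      rw [sum_comm]
      exact sum_congr rfl fun n _ => sum_congr rfl fun m _ => by ring
    rw [two_mul, expand]
    nth_rewrite 2 [swapped]
    rw [← sum_add_distrib]
    exact sum_congr rfl fun n _ => by
      rw [← sum_add_distrib]; exact sum_congr rfl fun m _ => by simp only [term]; ring
  have hterm : ∀ n ∈ s, ∀ m ∈ s, 0 ≤ term n m := fun n hn m hm =>
    mul_nonneg (mul_nonneg (hw n hn) (hw m hm))
      (sub_mul_pow_mul_pow_sub_nonneg hx.le hxy.le n m)
  have hterm_ji : 0 < term j i := by
    have hcross : x ^ j * y ^ i < y ^ j * x ^ i := by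
      obtain ⟨d, rfl⟩ := Nat.exists_eq_add_of_lt hij
      have : x ^ (d + 1) < y ^ (d + 1) := pow_lt_pow_left₀ hxy hx.le d.succ_ne_zero
      calc x ^ (i + d + 1) * y ^ i = (x * y) ^ i * x ^ (d + 1) := by ring
        _ < (x * y) ^ i * y ^ (d + 1) :=
          mul_lt_mul_of_pos_left this (pow_pos (mul_pos hx (hx.trans hxy)) i)
        _ = y ^ (i + d + 1) * x ^ i := by ring
    have : (i : ℝ) < j := by exact_mod_cast hij
    exact mul_pos (mul_pos hwj hwi) (mul_pos (by linarith) (by linarith))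
  have hsum : 0 < ∑ n ∈ s, ∑ m ∈ s, term n m :=
    calc 0 < term j i := hterm_ji
      _ ≤ ∑ m ∈ s, term j m := single_le_sum (hterm j hj) hi
      _ ≤ ∑ n ∈ s, ∑ m ∈ s, term n m :=
        single_le_sum (fun n hn => sum_nonneg (hterm n hn)) hj
  linarith

lemma strictMonoOn_sum_nat_mul_weight_mul_pow_div_sum (hw : ∀ n ∈ s, 0 ≤ w n)
    {i j : ℕ} (hi : i ∈ s) (hj : j ∈ s) (hij : i < j) (hwi : 0 < w i) (hwj : 0 < w j) :
    StrictMonoOn (fun x : ℝ => (∑ n ∈ s, n * w n * x ^ n) / ∑ n ∈ s, w n * x ^ n)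
      (Set.Ioi 0) := by
  intro x hx y hy hxy
  rw [div_lt_div_iff₀ (sum_weight_mul_pow_pos hw hi hwi hx)
    (sum_weight_mul_pow_pos hw hi hwi hy)]
  exact sum_nat_mul_weight_mul_pow_mul_sum_lt hw hi hj hij hwi hwj hx hxy

end WeightedMean

lemma sum_range_succ_nat_mul_inv_factorial_mul_pow (k : ℕ) (ρ : ℝ) :
    ∑ j ∈ range (k + 1), j * (j ! : ℝ)⁻¹ * ρ ^ j = ρ * ∑ j ∈ range k, ρ ^ j / j ! := by
  rw [sum_range_succ', mul_sum]
  simp only [CharP.cast_eq_zero, zero_mul, add_zero, Nat.factorial_succ, Nat.cast_mul]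
  refine sum_congr rfl fun j _ => ?_
  have : (j ! : ℝ) ≠ 0 := by positivity
  field_simp
  ring

lemma occupancy_eq_div (k : ℕ) {μ y : ℝ} (hμ : 0 < μ) (hy : 0 < y) :
    y / ((k : ℝ) * μ) *
        (1 - ((y / μ) ^ k / (k ! : ℝ)) / ∑ j ∈ range (k + 1), (y / μ) ^ j / (j ! : ℝ))
      = (∑ j ∈ range (k + 1), j * (j ! : ℝ)⁻¹ * (y / μ) ^ j)
          / (∑ j ∈ range (k + 1), (j ! : ℝ)⁻¹ * (y / μ) ^ j) / k := by
  have hF : 0 < ∑ j ∈ range (k + 1), (y / μ) ^ j / (j ! : ℝ) :=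
    sum_pos (fun j _ => by positivity) ⟨0, by simp⟩
  rw [show y / (k * μ) = y / μ / k by rw [div_div, mul_comm]]
  simp only [sum_range_succ_nat_mul_inv_factorial_mul_pow, ← div_eq_inv_mul]
  rw [sum_range_succ] at hF ⊢
  rw [one_sub_div hF.ne']
  ring

/-- The occupancy of an `M/M/k/k` queue, `u(y) = (y/(kμ))(1 − B_k(y/μ))` with
Erlang blocking probability `B_k(ρ) = (ρ^k/k!)/(Σ_j ρ^j/j!)`, is strictly
increasing in the arrival rate `y` on `(0, ∞)`. -/
theorem occupancy_strictMonoOn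
    (k : ℕ) (hk : 0 < k) (μ : ℝ) (hμ : 0 < μ) :
    StrictMonoOn
      (fun y : ℝ => y / ((k : ℝ) * μ) *
        (1 - ((y / μ) ^ k / (Nat.factorial k : ℝ)) /
          (∑ j ∈ range (k + 1), (y / μ) ^ j / (Nat.factorial j : ℝ))))
      (Set.Ioi 0) := by
  have hmean := strictMonoOn_sum_nat_mul_weight_mul_pow_div_sum (s := range (k + 1))
    (w := fun j => (j ! : ℝ)⁻¹) (fun j _ => by positivity) (by simp) (by simp) hk
    (by positivity) (by positivity)
  intro x hx y hy hxy
  simp only [occupancy_eq_div k hμ hx, occupancy_eq_div k hμ hy]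
  exact div_lt_div_of_pos_right (hmean (div_pos hx hμ) (div_pos hy hμ) (div_lt_div_of_pos_right hxy hμ))
    (by exact_mod_cast hk)
end
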